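/- Every Bernstein function f satisfies |f^{(k)}(x)| ≤ (k!/x^k) f(x) for all integers k ≥ 0 and all x > 0. -/

import Mathlib

/-!
Differentiating under the integral sign, `f^{(k)}(x) = [k = 1] b + (-1)^{k+1} ∫ s^k e^{-sx} μ(ds)`
for `k ≥ 1`. The elementary inequality `e^u ≥ 1 + u^k/k!` gives
`(sx)^k e^{-sx} ≤ k! (1 - e^{-sx})`, so the integral is at most `k!/x^k` times the integral part
of `f x`; the linear part is handled by `b ≤ (a + b x)/x`. The same inequality, together with
`1 - e^{-sx} ≤ max 1 x * min 1 s`, provides all integrability and domination bounds.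
-/

open MeasureTheory Set Filter Real

lemma Real.one_add_pow_div_factorial_le_exp {u : ℝ} (hu : 0 ≤ u) {k : ℕ} (hk : k ≠ 0) :
    1 + u ^ k / k.factorial ≤ exp u :=
  calc 1 + u ^ k / k.factorial
      ≤ ∑ i ∈ Finset.range k, u ^ i / i.factorial + u ^ k / k.factorial := by
        gcongr
        simpa using Finset.single_le_sum (f := fun i => u ^ i / i.factorial)
          (fun i _ => by positivity) (Finset.mem_range.2 (Nat.pos_of_ne_zero hk))
    _ = ∑ i ∈ Finset.range (k + 1), u ^ i / i.factorial := (Finset.sum_range_succ _ _).symm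
    _ ≤ exp u := sum_le_exp_of_nonneg hu _

lemma Real.pow_mul_exp_neg_le {u : ℝ} (hu : 0 ≤ u) {k : ℕ} (hk : k ≠ 0) :
    u ^ k * exp (-u) ≤ k.factorial * (1 - exp (-u)) := by
  have hexp := one_add_pow_div_factorial_le_exp hu hk
  have hfac : (0 : ℝ) < k.factorial := by positivity
  have hpow : u ^ k ≤ k.factorial * (exp u - 1) := by
    rw [← div_le_iff₀' hfac]; linarith
  calc u ^ k * exp (-u) ≤ k.factorial * (exp u - 1) * exp (-u) := by gcongr
    _ = k.factorial * (1 - exp (-u)) := by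
      rw [mul_assoc, sub_mul, ← exp_add, add_neg_cancel, exp_zero, one_mul]

lemma Real.pow_mul_exp_neg_mul_le {s x : ℝ} (hs : 0 ≤ s) (hx : 0 < x) {k : ℕ} (hk : k ≠ 0) :
    s ^ k * exp (-(s * x)) ≤ k.factorial / x ^ k * (1 - exp (-(s * x))) := by
  rw [div_mul_eq_mul_div, le_div_iff₀ (by positivity), mul_right_comm, ← mul_pow]
  exact pow_mul_exp_neg_le (by positivity) hk

lemma Real.one_sub_exp_neg_mul_nonneg {s x : ℝ} (hs : 0 ≤ s) (hx : 0 ≤ x) :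
    0 ≤ 1 - exp (-(s * x)) := by
  rw [sub_nonneg, exp_le_one_iff, neg_nonpos]; positivity

lemma Real.one_sub_exp_neg_mul_le {s : ℝ} (hs : 0 ≤ s) (x : ℝ) :
    1 - exp (-(s * x)) ≤ max 1 x * min 1 s := by
  have hlin : 1 - exp (-(s * x)) ≤ s * x := by linarith [one_sub_le_exp_neg (s * x)]
  have hone : 1 - exp (-(s * x)) ≤ 1 := by linarith [exp_pos (-(s * x))]
  rcases le_total s 1 with h | h
  · rw [min_eq_right h]; nlinarith [le_max_right 1 x]
  · rw [min_eq_left h, mul_one]; exact hone.trans (le_max_left 1 x)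

lemma Real.hasDerivAt_pow_mul_exp_neg_mul (s : ℝ) (n : ℕ) (y : ℝ) :
    HasDerivAt (fun y => s ^ n * exp (-(s * y))) (-(s ^ (n + 1) * exp (-(s * y)))) y := by
  have hlin : HasDerivAt (fun y => -(s * y)) (-s) y :=
    ((hasDerivAt_id' y).const_mul s).neg.congr_deriv (by ring)
  exact (hlin.exp.const_mul (s ^ n)).congr_deriv (by ring)

lemma Real.pow_mul_exp_neg_mul_le_of_mem_ball {s x y : ℝ} (hs : 0 ≤ s)
    (hy : y ∈ Metric.ball x (x / 2)) (n : ℕ) :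
    ‖s ^ n * exp (-(s * y))‖ ≤ s ^ n * exp (-(s * (x / 2))) := by
  rw [Real.norm_of_nonneg (by positivity)]
  have hxy : x / 2 ≤ y := by
    rw [Metric.mem_ball, Real.dist_eq, abs_lt] at hy; linarith
  gcongr

noncomputable def laplaceMoment (ν : Measure ℝ) (n : ℕ) (x : ℝ) : ℝ :=
  ∫ s, s ^ n * exp (-(s * x)) ∂ν

section LevyMeasure

variable {ν : Measure ℝ}

lemma laplaceMoment_nonneg (hpos : ∀ᵐ s ∂ν, 0 ≤ s) (n : ℕ) (x : ℝ) :
    0 ≤ laplaceMoment ν n x :=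
  integral_nonneg_of_ae (hpos.mono fun s hs => by positivity)

variable (hpos : ∀ᵐ s ∂ν, 0 ≤ s) (hν : Integrable (fun s : ℝ => min 1 s) ν)
include hpos hν

lemma integrable_one_sub_exp_neg_mul {x : ℝ} (hx : 0 ≤ x) :
    Integrable (fun s => 1 - exp (-(s * x))) ν :=
  (hν.const_mul (max 1 x)).mono' (by fun_prop) <| hpos.mono fun s hs => by
    rw [Real.norm_of_nonneg (one_sub_exp_neg_mul_nonneg hs hx)]
    exact one_sub_exp_neg_mul_le hs x

lemma integrable_pow_mul_exp_neg_mul {n : ℕ} (hn : n ≠ 0) {x : ℝ} (hx : 0 < x) :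
    Integrable (fun s => s ^ n * exp (-(s * x))) ν :=
  ((integrable_one_sub_exp_neg_mul hpos hν hx.le).const_mul _).mono' (by fun_prop) <|
    hpos.mono fun s hs => by
      rw [Real.norm_of_nonneg (by positivity)]
      exact pow_mul_exp_neg_mul_le hs hx hn

lemma laplaceMoment_le {k : ℕ} (hk : k ≠ 0) {x : ℝ} (hx : 0 < x) :
    laplaceMoment ν k x ≤ k.factorial / x ^ k * ∫ s, (1 - exp (-(s * x))) ∂ν := by
  rw [← integral_const_mul]
  exact integral_mono_ae (integrable_pow_mul_exp_neg_mul hpos hν hk hx)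
    ((integrable_one_sub_exp_neg_mul hpos hν hx.le).const_mul _)
    (hpos.mono fun s hs => pow_mul_exp_neg_mul_le hs hx hk)

/- On the neighbourhood `(x/2, 3x/2)` of `x` the derivatives of the integrands are dominated by
`s ^ (n + 1) * e^{-s x / 2}`, which is integrable. -/
lemma hasDerivAt_laplaceMoment {n : ℕ} (hn : n ≠ 0) {x : ℝ} (hx : 0 < x) :
    HasDerivAt (laplaceMoment ν n) (-laplaceMoment ν (n + 1) x) x := by
  have := (hasDerivAt_integral_of_dominated_loc_of_deriv_le
    (F' := fun y s => -(s ^ (n + 1) * exp (-(s * y))))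
    (Metric.ball_mem_nhds x (half_pos hx)) (.of_forall fun y => by fun_prop)
    (integrable_pow_mul_exp_neg_mul hpos hν hn hx) (by fun_prop)
    (hpos.mono fun s hs y hy => by
      simpa only [norm_neg] using pow_mul_exp_neg_mul_le_of_mem_ball hs hy (n + 1))
    (integrable_pow_mul_exp_neg_mul hpos hν n.add_one_ne_zero (half_pos hx))
    (.of_forall fun s y _ => hasDerivAt_pow_mul_exp_neg_mul s n y)).2
  rwa [integral_neg] at this

lemma hasDerivAt_integral_one_sub_exp_neg_mul {x : ℝ} (hx : 0 < x) :
    HasDerivAt (fun y => ∫ s, (1 - exp (-(s * y))) ∂ν) (laplaceMoment ν 1 x) x :=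
  (hasDerivAt_integral_of_dominated_loc_of_deriv_le
    (F' := fun y s => s ^ 1 * exp (-(s * y)))
    (Metric.ball_mem_nhds x (half_pos hx)) (.of_forall fun y => by fun_prop)
    (integrable_one_sub_exp_neg_mul hpos hν hx.le) (by fun_prop)
    (hpos.mono fun s hs y hy => pow_mul_exp_neg_mul_le_of_mem_ball hs hy 1)
    (integrable_pow_mul_exp_neg_mul hpos hν one_ne_zero (half_pos hx))
    (.of_forall fun s y _ => by
      simpa [sub_eq_add_neg] using (hasDerivAt_pow_mul_exp_neg_mul s 0 y).neg.const_add 1)).2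

lemma iteratedDeriv_succ_eq_laplaceMoment {a b : ℝ} {f : ℝ → ℝ}
    (hf : ∀ x, f x = a + b * x + ∫ s, (1 - exp (-(s * x))) ∂ν) (n : ℕ) {x : ℝ} (hx : 0 < x) :
    iteratedDeriv (n + 1) f x = (if n = 0 then b else 0) + (-1) ^ n * laplaceMoment ν (n + 1) x := by
  induction n generalizing x with
  | zero =>
    have hlin : HasDerivAt (fun y : ℝ => a + b * y) b x := by
      simpa using ((hasDerivAt_id x).const_mul b).const_add a
    rw [iteratedDeriv_one, funext hf]
    exact (hlin.add (hasDerivAt_integral_one_sub_exp_neg_mul hpos hν hx)).deriv.trans (by simp)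
  | succ n ih =>
    have hev : iteratedDeriv (n + 1) f =ᶠ[nhds x]
        fun y => (if n = 0 then b else 0) + (-1) ^ n * laplaceMoment ν (n + 1) y :=
      eventuallyEq_of_mem (Ioi_mem_nhds hx) fun y hy => ih hy
    rw [iteratedDeriv_succ, hev.deriv_eq,
      (((hasDerivAt_laplaceMoment hpos hν n.add_one_ne_zero hx).const_mul _).const_add _).deriv,
      if_neg n.add_one_ne_zero]
    ring

end LevyMeasure

/-- Every Bernstein function `f(x) = a + bx + ∫_{(0,∞)} (1 - e^{-sx}) μ(ds)` satisfies
`|f^{(k)}(x)| ≤ (k!/x^k) f(x)` for all `k ≥ 0` and `x > 0`. -/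
theorem stmt_2 (a b : ℝ) (ha : 0 ≤ a) (hb : 0 ≤ b)
    (μ : Measure ℝ)
    (hμ : ∫⁻ s in Set.Ioi (0 : ℝ), ENNReal.ofReal (min 1 s) ∂μ < ⊤)
    (f : ℝ → ℝ)
    (hf : ∀ x : ℝ, f x = a + b * x + ∫ s in Set.Ioi (0 : ℝ), (1 - Real.exp (-(s * x))) ∂μ)
    (k : ℕ) (x : ℝ) (hx : 0 < x) :
    |iteratedDeriv k f x| ≤ (Nat.factorial k : ℝ) / x ^ k * f x := by
  have hpos : ∀ᵐ s ∂μ.restrict (Ioi 0), 0 ≤ s :=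
    (ae_restrict_mem measurableSet_Ioi).mono fun s hs => le_of_lt hs
  have hν : Integrable (fun s : ℝ => min 1 s) (μ.restrict (Ioi 0)) :=
    ⟨by fun_prop, (hasFiniteIntegral_iff_ofReal (hpos.mono fun s hs => le_min zero_le_one hs)).2 hμ⟩
  have hI : 0 ≤ ∫ s in Ioi 0, (1 - exp (-(s * x))) ∂μ :=
    integral_nonneg_of_ae (hpos.mono fun s hs => one_sub_exp_neg_mul_nonneg hs hx.le)
  cases k with
  | zero =>
    have hfx : 0 ≤ f x := by rw [hf x]; positivity
    simp [abs_of_nonneg hfx]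
  | succ n =>
    have hlin : (if n = 0 then b else 0) ≤ (n + 1).factorial / x ^ (n + 1) * (a + b * x) := by
      split_ifs with hn
      · subst hn
        rw [zero_add, Nat.factorial_one, pow_one, Nat.cast_one, one_div, inv_mul_eq_div,
          add_div, mul_div_cancel_right₀ b hx.ne']
        linarith [div_nonneg ha hx.le]
      · positivity
    rw [iteratedDeriv_succ_eq_laplaceMoment hpos hν hf n hx, hf x]
    calc |(if n = 0 then b else 0) + (-1) ^ n * laplaceMoment _ (n + 1) x|
        ≤ (if n = 0 then b else 0) + laplaceMoment (μ.restrict (Ioi 0)) (n + 1) x := by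
          grw [abs_add_le, abs_mul, abs_pow, abs_neg, abs_one, one_pow, one_mul,
            abs_of_nonneg (laplaceMoment_nonneg hpos _ _), abs_of_nonneg (by split_ifs <;> simp [hb])]
      _ ≤ _ := add_le_add hlin (laplaceMoment_le hpos hν n.add_one_ne_zero hx)
      _ = _ := by ring
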